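/- arXiv:2311.18606 — 5 statements merged into one kernel-verified Lean document; each statement's English description precedes it below -/
import Mathlib

section
/- Let n ≥ 2 and ε > 0. There exists δ > 0 such that for all λ₁,…,λₙ with λᵢ ≥ ε·H > 0 for every i (where H = Σλᵢ), one has (n·Σλᵢ² − H²)/H² ≥ δ·(1/nⁿ − (Πλᵢ)/Hⁿ). -/
/-!
Normalize `tᵢ = n λᵢ / H`, so that `∑ tᵢ = n` and pinching gives `tᵢ ≥ nε ≥ (nε)²`.
For `t ≥ c > 0` one has `log t ≥ 1 - 1/t ≥ (t - 1) - (t - 1)² / c`; summing, the linear terms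
cancel, so `∏ tᵢ ≥ exp (-S / c) ≥ 1 - S / c` with `S = ∑ (tᵢ - 1)²`. Since
`S = n (n|A|² - H²) / H²` and `∏ tᵢ = nⁿ K / Hⁿ`, this is the claim with `δ = ε² nⁿ⁺¹`.
-/

lemma sub_sub_sq_div_le_log {c t : ℝ} (hc : 0 < c) (hct : c ≤ t) :
    (t - 1) - (t - 1) ^ 2 / c ≤ Real.log t := by
  have ht : 0 < t := hc.trans_le hct
  have hinv : (t - 1) ^ 2 / t ≤ (t - 1) ^ 2 / c :=
    div_le_div_of_nonneg_left (sq_nonneg _) hc hct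
  have hlog := Real.one_sub_inv_le_log_of_pos ht
  have : 1 - t⁻¹ = (t - 1) - (t - 1) ^ 2 / t := by field_simp; ring
  linarith

lemma one_sub_prod_mul_le_sum_sq {ι : Type*} [Fintype ι] {t : ι → ℝ} {c : ℝ} (hc : 0 < c)
    (hct : ∀ i, c ≤ t i) (hsum : ∑ i, t i = Fintype.card ι) :
    (1 - ∏ i, t i) * c ≤ ∑ i, (t i - 1) ^ 2 := by
  set S := ∑ i, (t i - 1) ^ 2
  have hlog : -(S / c) ≤ ∑ i, Real.log (t i) := by
    have hdev : ∑ i, (t i - 1) = 0 := by simp [Finset.sum_sub_distrib, hsum]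
    calc -(S / c) = ∑ i, ((t i - 1) - (t i - 1) ^ 2 / c) := by
          rw [Finset.sum_sub_distrib, hdev, ← Finset.sum_div]; ring
      _ ≤ _ := Finset.sum_le_sum fun i _ => sub_sub_sq_div_le_log hc (hct i)
  have hprod : 1 - S / c ≤ ∏ i, t i := calc
    1 - S / c ≤ Real.exp (-(S / c)) := by linarith [Real.add_one_le_exp (-(S / c))]
    _ ≤ Real.exp (∑ i, Real.log (t i)) := Real.exp_le_exp.2 hlog
    _ = ∏ i, t i := by
      rw [Real.exp_sum]
      exact Finset.prod_congr rfl fun i _ => Real.exp_log (hc.trans_le (hct i))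
  have : 1 - ∏ i, t i ≤ S / c := by linarith
  rwa [le_div_iff₀ hc] at this

section Normalize

variable {ι : Type*} [Fintype ι] (lam : ι → ℝ)

lemma sum_normalize_sub_one_sq (hH : ∑ i, lam i ≠ 0) :
    ∑ i, (Fintype.card ι * lam i / ∑ j, lam j - 1) ^ 2 =
      Fintype.card ι * ((Fintype.card ι * ∑ i, lam i ^ 2 - (∑ i, lam i) ^ 2) / (∑ i, lam i) ^ 2) := by
  set n : ℝ := (Fintype.card ι : ℝ)
  set H := ∑ j, lam j
  have hexp : ∀ i, (n * lam i / H - 1) ^ 2 = n ^ 2 / H ^ 2 * lam i ^ 2 - 2 * n / H * lam i + 1 :=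
    fun i => by field_simp; ring
  simp only [hexp, Finset.sum_add_distrib, Finset.sum_sub_distrib, ← Finset.mul_sum]
  simp only [Finset.sum_const, Finset.card_univ, nsmul_eq_mul, mul_one]
  field_simp
  ring

lemma prod_normalize :
    ∏ i, (Fintype.card ι * lam i / ∑ j, lam j) =
      (Fintype.card ι : ℝ) ^ Fintype.card ι * ((∏ i, lam i) / (∑ i, lam i) ^ Fintype.card ι) := by
  rw [Finset.prod_div_distrib, Finset.prod_mul_distrib, Finset.prod_const, Finset.prod_const,
    Finset.card_univ, mul_div_assoc]

lemma sum_normalize (hH : ∑ i, lam i ≠ 0) :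
    ∑ i, (Fintype.card ι * lam i / ∑ j, lam j) = Fintype.card ι := by
  rw [← Finset.sum_div, ← Finset.mul_sum, mul_div_assoc, div_self hH, mul_one]

variable {lam} {ε : ℝ}

lemma card_mul_le_one_of_pinched (hH : 0 < ∑ j, lam j) (hpinch : ∀ i, ε * ∑ j, lam j ≤ lam i) :
    Fintype.card ι * ε ≤ 1 := by
  have := Finset.card_nsmul_le_sum Finset.univ lam _ fun i _ => hpinch i
  rw [Finset.card_univ, nsmul_eq_mul, ← mul_assoc] at this
  exact (mul_le_iff_le_one_left hH).1 this

lemma sq_card_mul_le_normalize_of_pinched (hH : 0 < ∑ j, lam j)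
    (hpinch : ∀ i, ε * ∑ j, lam j ≤ lam i) (hε : 0 < ε) (i : ι) :
    (Fintype.card ι * ε) ^ 2 ≤ Fintype.card ι * lam i / ∑ j, lam j := by
  set n : ℝ := (Fintype.card ι : ℝ)
  have hnε : 0 ≤ n * ε := by positivity
  rw [le_div_iff₀ hH]
  calc (n * ε) ^ 2 * ∑ j, lam j ≤ n * ε * ∑ j, lam j := by
        gcongr
        nlinarith [card_mul_le_one_of_pinched hH hpinch]
    _ ≤ n * lam i := by rw [mul_assoc]; exact mul_le_mul_of_nonneg_left (hpinch i) (by positivity)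

end Normalize

/-- Pinching controls the deficit of `K/Hⁿ` from `1/nⁿ` by the traceless second
fundamental form (cf. Lemma 5.1). -/
theorem stmt_2 (n : ℕ) (hn : 2 ≤ n) (ε : ℝ) (hε : 0 < ε) :
    ∃ δ : ℝ, 0 < δ ∧ ∀ lam : Fin n → ℝ,
      (∀ i, ε * (∑ j, lam j) ≤ lam i) → 0 < ε * (∑ j, lam j) →
      ((n : ℝ) * (∑ i, (lam i) ^ 2) - (∑ i, lam i) ^ 2) / (∑ i, lam i) ^ 2 ≥
        δ * (1 / (n : ℝ) ^ n - (∏ i, lam i) / (∑ i, lam i) ^ n) := by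
  have hn0 : (0 : ℝ) < n := by positivity
  refine ⟨ε ^ 2 * n ^ (n + 1), by positivity, fun lam hpinch hpos => ?_⟩
  have hH : 0 < ∑ j, lam j := pos_of_mul_pos_right hpos hε.le
  have key := one_sub_prod_mul_le_sum_sq (by simpa using pow_pos (mul_pos hn0 hε) 2)
    (sq_card_mul_le_normalize_of_pinched hH hpinch hε) (sum_normalize lam hH.ne')
  rw [sum_normalize_sub_one_sq lam hH.ne', prod_normalize] at key
  simp only [Fintype.card_fin] at key
  set X := ((n : ℝ) * ∑ i, lam i ^ 2 - (∑ i, lam i) ^ 2) / (∑ i, lam i) ^ 2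
  set Q := (∏ i, lam i) / (∑ i, lam i) ^ n
  calc ε ^ 2 * n ^ (n + 1) * (1 / n ^ n - Q) = (1 - n ^ n * Q) * (n * ε) ^ 2 / n := by
        field_simp; ring
    _ ≤ n * X / n := by gcongr
    _ = X := mul_div_cancel_left₀ X hn0.ne'
end

section
/- Let n ≥ 2. For every β > 0 there exists a constant C with 0 < C < 1/nⁿ such that: if λ₁,…,λₙ > 0 satisfy (Πλᵢ)/(Σλᵢ)ⁿ ≥ C, then there exists ε with 0 < ε ≤ 1/n such that λᵢ ≥ ε·(Σλᵢ) for all i. Moreover ε → 1/n as C → 1/nⁿ. -/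
/-!
If one curvature is `λᵢ = t H`, AM–GM applied to the other `n - 1` gives
`K / Hⁿ ≤ t ((1 - t) / (n - 1))ⁿ⁻¹`. This profile increases on `[0, 1/n]` from `0` to `1/nⁿ`,
so choosing `C` to be its value at some `ε < 1/n` close to `1/n`, the pinching `K / Hⁿ ≥ C`
forces `t ≥ ε` for every `i`.
-/

open Finset

theorem Real.prod_le_mean_pow_card {ι : Type*} (s : Finset ι) (f : ι → ℝ)
    (hf : ∀ i ∈ s, 0 ≤ f i) : ∏ i ∈ s, f i ≤ ((∑ i ∈ s, f i) / #s) ^ #s := by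
  rcases s.eq_empty_or_nonempty with rfl | hs
  · simp
  have hcard : (0 : ℝ) < #s := by exact_mod_cast hs.card_pos
  have h := Real.geom_mean_le_arith_mean s (fun _ ↦ 1) f (fun _ _ ↦ zero_le_one)
    (by simpa using hcard) hf
  simp only [Real.rpow_one, one_mul, sum_const, nsmul_eq_mul, mul_one] at h
  have hprod : 0 ≤ ∏ i ∈ s, f i := prod_nonneg hf
  calc ∏ i ∈ s, f i = ((∏ i ∈ s, f i) ^ (#s : ℝ)⁻¹) ^ #s := by
        rw [← Real.rpow_natCast, ← Real.rpow_mul hprod, inv_mul_cancel₀ hcard.ne',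
          Real.rpow_one]
    _ ≤ ((∑ i ∈ s, f i) / #s) ^ #s := by gcongr

/-- By AM–GM on the other `n - 1` curvatures, `K / Hⁿ ≤ pinchingProfile n t` as soon as one
curvature equals `t H`. -/
noncomputable def pinchingProfile (n : ℕ) (t : ℝ) : ℝ :=
  t * ((1 - t) / (n - 1 : ℕ)) ^ (n - 1)

theorem pinchingProfile_zero (n : ℕ) : pinchingProfile n 0 = 0 := by
  simp [pinchingProfile]

theorem pinchingProfile_inv {n : ℕ} (hn : 0 < n) : pinchingProfile n (1 / n) = 1 / n ^ n := by
  obtain ⟨k, rfl⟩ : ∃ k, n = k + 1 := ⟨n - 1, by omega⟩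
  rcases k.eq_zero_or_pos with rfl | hk
  · simp [pinchingProfile]
  have : ((1 : ℝ) - 1 / (k + 1)) / k = 1 / (k + 1) := by
    field_simp; ring
  simp only [pinchingProfile, Nat.add_sub_cancel, Nat.cast_add, Nat.cast_one, this]
  rw [← pow_succ', one_div_pow]

theorem strictMonoOn_mul_one_sub_pow (k : ℕ) :
    StrictMonoOn (fun t : ℝ ↦ t * (1 - t) ^ k) (Set.Icc 0 (1 / (k + 1))) := by
  apply strictMonoOn_of_deriv_pos (convex_Icc _ _) (by fun_prop)
  intro t ht
  rw [interior_Icc] at ht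
  obtain ⟨ht0, htk⟩ := ht
  have htk' : t * (k + 1) < 1 := (lt_div_iff₀ (by positivity)).mp htk
  have hderiv : HasDerivAt (fun t : ℝ ↦ t * (1 - t) ^ k)
      (1 * (1 - t) ^ k + t * (k * (1 - t) ^ (k - 1) * (0 - 1))) t :=
    (hasDerivAt_id t).mul (((hasDerivAt_const t 1).sub (hasDerivAt_id t)).pow k)
  rw [hderiv.deriv]
  rcases k with _ | j
  · simp
  · have h1t : 0 < 1 - t := by push_cast at htk'; nlinarith
    have : 1 * (1 - t) ^ (j + 1) + t * ((j + 1 : ℕ) * (1 - t) ^ (j + 1 - 1) * (0 - 1))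
        = (1 - t) ^ j * (1 - (j + 2) * t) := by push_cast; ring
    rw [this]
    push_cast at htk'
    exact mul_pos (pow_pos h1t _) (by nlinarith)

theorem strictMonoOn_pinchingProfile {n : ℕ} (hn : 0 < n) :
    StrictMonoOn (pinchingProfile n) (Set.Icc 0 (1 / n)) := by
  obtain ⟨k, rfl⟩ : ∃ k, n = k + 1 := ⟨n - 1, by omega⟩
  have hprofile : pinchingProfile (k + 1) = fun t ↦ t * (1 - t) ^ k * (1 / (k : ℝ) ^ k) := by
    ext t
    simp only [pinchingProfile, Nat.add_sub_cancel, div_pow]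
    ring
  rw [hprofile]
  push_cast
  exact fun a ha b hb hab ↦
    mul_lt_mul_of_pos_right (strictMonoOn_mul_one_sub_pow k ha hb hab)
      (one_div_pos.mpr (by exact_mod_cast Nat.pow_self_pos))

theorem prod_div_sum_pow_le_pinchingProfile {ι : Type*} [Fintype ι] (lam : ι → ℝ)
    (hlam : ∀ j, 0 < lam j) (i : ι) :
    (∏ j, lam j) / (∑ j, lam j) ^ Fintype.card ι
      ≤ pinchingProfile (Fintype.card ι) (lam i / ∑ j, lam j) := by
  classical
  set n := Fintype.card ι
  set S := ∑ j, lam j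
  have hS : 0 < S := sum_pos (fun j _ ↦ hlam j) ⟨i, mem_univ i⟩
  have hcard : #(univ.erase i) = n - 1 := by
    rw [card_erase_of_mem (mem_univ i), card_univ]
  have hothers : ∏ j ∈ univ.erase i, lam j ≤ ((S - lam i) / (n - 1 : ℕ)) ^ (n - 1) := by
    rw [← sum_erase_eq_sub (mem_univ i), ← hcard]
    exact Real.prod_le_mean_pow_card _ _ fun j _ ↦ (hlam j).le
  have hSpow : S ^ n = S * S ^ (n - 1) := by
    rw [← pow_succ', Nat.sub_add_cancel (Fintype.card_pos_iff.mpr ⟨i⟩)]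
  calc (∏ j, lam j) / S ^ n
      = (lam i * ∏ j ∈ univ.erase i, lam j) / S ^ n := by
        rw [mul_prod_erase _ _ (mem_univ i)]
    _ ≤ (lam i * ((S - lam i) / (n - 1 : ℕ)) ^ (n - 1)) / S ^ n := by
        gcongr; exact (hlam i).le
    _ = pinchingProfile n (lam i / S) := by
        rw [pinchingProfile, hSpow, one_sub_div hS.ne', div_right_comm _ S, div_pow _ S,
          mul_div_mul_comm]

theorem mul_sum_le_of_pinchingProfile_le {ι : Type*} [Fintype ι] (lam : ι → ℝ)
    (hlam : ∀ j, 0 < lam j) {ε : ℝ} (hε : ε ≤ 1 / Fintype.card ι)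
    (hpinch :
      pinchingProfile (Fintype.card ι) ε ≤ (∏ j, lam j) / (∑ j, lam j) ^ Fintype.card ι)
    (i : ι) : ε * ∑ j, lam j ≤ lam i := by
  have hS : 0 < ∑ j, lam j := sum_pos (fun j _ ↦ hlam j) ⟨i, mem_univ i⟩
  by_contra! hsmall
  have ht : lam i / ∑ j, lam j < ε := (div_lt_iff₀ hS).mpr hsmall
  have ht0 : 0 ≤ lam i / ∑ j, lam j := (div_pos (hlam i) hS).le
  have hprofile := strictMonoOn_pinchingProfile (Fintype.card_pos_iff.mpr ⟨i⟩)
    ⟨ht0, ht.le.trans hε⟩ ⟨ht0.trans ht.le, hε⟩ ht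
  linarith [prod_div_sum_pow_le_pinchingProfile lam hlam i]

theorem stmt_3_general (n : ℕ) (hn : 2 ≤ n) :
    ∀ η : ℝ, 0 < η → ∃ C : ℝ, 0 < C ∧ C < 1 / (n : ℝ) ^ n ∧
      ∃ ε : ℝ, 0 < ε ∧ ε ≤ 1 / (n : ℝ) ∧ 1 / (n : ℝ) - η < ε ∧
        ∀ lam : Fin n → ℝ, (∀ i, 0 < lam i) →
          C ≤ (∏ i, lam i) / (∑ i, lam i) ^ n →
          ∀ i, ε * (∑ j, lam j) ≤ lam i := by
  intro η hη
  have hn0 : 0 < n := by omega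
  have hn_real : (0 : ℝ) < n := by exact_mod_cast hn0
  set ε : ℝ := max (1 / (2 * n)) (1 / n - η / 2)
  have hε0 : 0 < ε := lt_max_of_lt_left (by positivity)
  have hεn : ε < 1 / n := max_lt (by gcongr; linarith) (by linarith)
  have hprofile := strictMonoOn_pinchingProfile hn0
  have hεmem : ε ∈ Set.Icc 0 (1 / (n : ℝ)) := ⟨hε0.le, hεn.le⟩
  refine ⟨pinchingProfile n ε, ?_, ?_, ε, hε0, hεn.le, ?_, fun lam hlam hpinch i ↦ ?_⟩
  · rw [← pinchingProfile_zero n]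
    exact hprofile ⟨le_rfl, by positivity⟩ hεmem hε0
  · rw [← pinchingProfile_inv hn0]
    exact hprofile hεmem ⟨by positivity, le_rfl⟩ hεn
  · linarith [le_max_right (1 / (2 * n : ℝ)) (1 / n - η / 2)]
  · exact mul_sum_le_of_pinchingProfile_le lam hlam (by simpa using hεn.le)
      (by simpa using hpinch) i

/-- Lemma 4.3 (first part): strong pinching of `K/Hⁿ` forces every principal
curvature to be a definite fraction `ε` of `H`, and `ε → 1/n` as `C → 1/nⁿ`
(formalized: for any `η > 0` the constant `C` can be chosen so that
`1/n - η < ε`). -/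
theorem stmt_3 (n : ℕ) (hn : 2 ≤ n) (β : ℝ) (hβ : 0 < β) :
    ∀ η : ℝ, 0 < η → ∃ C : ℝ, 0 < C ∧ C < 1 / (n : ℝ) ^ n ∧
      ∃ ε : ℝ, 0 < ε ∧ ε ≤ 1 / (n : ℝ) ∧ 1 / (n : ℝ) - η < ε ∧
        ∀ lam : Fin n → ℝ, (∀ i, 0 < lam i) →
          C ≤ (∏ i, lam i) / (∑ i, lam i) ^ n →
          ∀ i, ε * (∑ j, lam j) ≤ lam i :=
  stmt_3_general n hn
end

section
/- Let n ≥ 2 and let C satisfy 0 < C < 1/nⁿ be such that λᵢ ≥ ε(Σλⱼ) for all i whenever (Πλⱼ)/(Σλⱼ)ⁿ ≥ C. Then additionally |1/λᵢ − n/H| ≤ ε²/(4nβH) for each i, for an appropriate choice of C close enough to 1/nⁿ, where H = Σλⱼ and β > 0 is any fixed constant. -/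
/-!
Put `xᵢ = n λᵢ / H`, so that `∑ xᵢ = n` and `∏ xᵢ = nⁿ ∏ λⱼ / Hⁿ`. On `(0, n]` one has
`log x ≤ x - 1 - (x - 1)² / (4n)`, hence `∏ xᵢ ≤ exp (-∑ (xᵢ - 1)² / (4n))`: a pinching
`∏ λⱼ / Hⁿ ≥ exp (-d² / (4n)) / nⁿ` forces `|xᵢ - 1| ≤ d` for every `i`. For `d ≤ 1/2` this gives
`λᵢ ≥ H / (2n)` and `|1/λᵢ - n/H| = |xᵢ - 1| / λᵢ ≤ 2nd / H`, and `d` is then taken small in terms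
of `n` and `β`.
-/

open Real Finset

theorem Real.log_le_sub_one_sub_sq_div {y m : ℝ} (hy : 0 < y) (hym : y ≤ m) (hm : 1 ≤ m) :
    log y ≤ y - 1 - (y - 1) ^ 2 / (4 * m) := by
  have hs : 0 < √y := sqrt_pos.2 hy
  have hsq : √y ^ 2 = y := sq_sqrt hy.le
  -- `log y = 2 log √y ≤ 2 (√y - 1) = y - 1 - (√y - 1)²`, and `(y - 1)² = (√y - 1)² (√y + 1)²`
  have hlog : log y ≤ 2 * (√y - 1) := by
    have := log_le_sub_one_of_pos hs
    rw [log_sqrt hy.le] at this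
    linarith
  have hfactor : (y - 1) ^ 2 = (√y - 1) ^ 2 * (√y + 1) ^ 2 := by
    nth_rw 1 [← hsq]; ring
  have hbound : (√y + 1) ^ 2 ≤ 4 * m := by nlinarith [sq_nonneg (√y - 1)]
  have : (y - 1) ^ 2 / (4 * m) ≤ (√y - 1) ^ 2 := by
    rw [div_le_iff₀ (by positivity), hfactor]
    exact mul_le_mul_of_nonneg_left hbound (sq_nonneg _)
  nlinarith

variable {ι : Type*} [Fintype ι]

theorem prod_le_exp_neg_sum_sq_sub_one {x : ι → ℝ} (hx : ∀ i, 0 < x i)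
    (hsum : ∑ i, x i = Fintype.card ι) :
    ∏ i, x i ≤ exp (-(∑ i, (x i - 1) ^ 2) / (4 * Fintype.card ι)) := by
  set N : ℝ := (Fintype.card ι : ℝ) with hN_def
  have hlog : ∀ i, log (x i) ≤ x i - 1 - (x i - 1) ^ 2 / (4 * N) := fun i ↦ by
    have hxN : x i ≤ N := hsum ▸ single_le_sum (fun j _ ↦ (hx j).le) (mem_univ i)
    have hN : 1 ≤ N := by
      have : Nonempty ι := ⟨i⟩
      exact Nat.one_le_cast.2 Fintype.card_pos
    exact log_le_sub_one_sub_sq_div (hx i) hxN hN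
  calc ∏ i, x i = exp (∑ i, log (x i)) := by
        rw [exp_sum]; exact prod_congr rfl fun i _ ↦ (exp_log (hx i)).symm
    _ ≤ exp (∑ i, (x i - 1 - (x i - 1) ^ 2 / (4 * N))) :=
        exp_le_exp.2 (sum_le_sum fun i _ ↦ hlog i)
    _ = exp (-(∑ i, (x i - 1) ^ 2) / (4 * N)) := by
        rw [sum_sub_distrib, sum_sub_distrib, hsum, ← sum_div]
        simp only [sum_const, card_univ, nsmul_eq_mul, mul_one, ← hN_def]
        congr 1; ring

theorem abs_sub_one_le_of_exp_le_prod {x : ι → ℝ} (hx : ∀ i, 0 < x i)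
    (hsum : ∑ i, x i = Fintype.card ι) {d : ℝ} (hd : 0 ≤ d)
    (hprod : exp (-d ^ 2 / (4 * Fintype.card ι)) ≤ ∏ i, x i) (i : ι) : |x i - 1| ≤ d := by
  have : Nonempty ι := ⟨i⟩
  have hN : (0 : ℝ) < 4 * Fintype.card ι := by positivity
  have hS : ∑ j, (x j - 1) ^ 2 ≤ d ^ 2 := by
    have := exp_le_exp.1 (hprod.trans (prod_le_exp_neg_sum_sq_sub_one hx hsum))
    rwa [div_le_div_iff_of_pos_right hN, neg_le_neg_iff] at this
  refine abs_le_of_sq_le_sq ?_ hd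
  exact (single_le_sum (f := fun j ↦ (x j - 1) ^ 2) (fun j _ ↦ sq_nonneg _) (mem_univ i)).trans hS

theorem abs_card_mul_div_sum_sub_one_le {lam : ι → ℝ} (hlam : ∀ i, 0 < lam i) {d : ℝ}
    (hd : 0 ≤ d)
    (hpinch : exp (-d ^ 2 / (4 * Fintype.card ι)) / (Fintype.card ι : ℝ) ^ Fintype.card ι ≤
      (∏ i, lam i) / (∑ i, lam i) ^ Fintype.card ι) (i : ι) :
    |Fintype.card ι * lam i / ∑ j, lam j - 1| ≤ d := by
  have : Nonempty ι := ⟨i⟩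
  set N : ℝ := (Fintype.card ι : ℝ)
  have hN : 0 < N := by positivity
  have hH : 0 < ∑ j, lam j := sum_pos (fun j _ ↦ hlam j) univ_nonempty
  refine abs_sub_one_le_of_exp_le_prod (fun j ↦ div_pos (mul_pos hN (hlam j)) hH) ?_ hd ?_ i
  · rw [← sum_div, ← mul_sum, mul_div_assoc, div_self hH.ne', mul_one]
  · rw [prod_div_distrib, prod_mul_distrib]
    simp only [prod_const, card_univ]
    rw [div_le_iff₀ (by positivity)] at hpinch
    exact hpinch.trans_eq (by ring)

section

variable {N l H d : ℝ}

theorem le_of_abs_mul_div_sub_one_le (hN : 0 < N) (hH : 0 < H) (hd : d ≤ 1 / 2)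
    (h : |N * l / H - 1| ≤ d) : 1 / (2 * N) * H ≤ l := by
  have : 1 / 2 ≤ N * l / H := by linarith [neg_abs_le (N * l / H - 1)]
  rw [le_div_iff₀ hH] at this
  rw [div_mul_eq_mul_div, one_mul, div_le_iff₀ (by positivity)]
  linarith

theorem abs_one_div_sub_le_of_abs_mul_div_sub_one_le (hN : 0 < N) (hH : 0 < H) (hl : 0 < l)
    (hd : d ≤ 1 / 2) (h : |N * l / H - 1| ≤ d) : |1 / l - N / H| ≤ 2 * N * d / H := by
  have hlow := le_of_abs_mul_div_sub_one_le hN hH hd h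
  have hd0 : 0 ≤ d := (abs_nonneg _).trans h
  calc |1 / l - N / H| = |N * l / H - 1| / l := by
        rw [← abs_of_pos hl, ← abs_div, abs_of_pos hl, ← abs_neg]
        congr 1; field_simp; ring
    _ ≤ d / (1 / (2 * N) * H) := div_le_div₀ hd0 h (by positivity) hlow
    _ = 2 * N * d / H := by field_simp

end

/-- Lemma 4.3 (second part): for an appropriate pinching constant `C` close to
`1/nⁿ`, the pinching `K/Hⁿ ≥ C` implies `λᵢ ≥ εH` and moreover
`|1/λᵢ − n/H| ≤ ε²/(4nβH)` for each `i`. -/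
theorem stmt_4 (n : ℕ) (hn : 2 ≤ n) (β : ℝ) (hβ : 0 < β) :
    ∃ C : ℝ, 0 < C ∧ C < 1 / (n : ℝ) ^ n ∧
      ∃ ε : ℝ, 0 < ε ∧ ε ≤ 1 / (n : ℝ) ∧
        ∀ lam : Fin n → ℝ, (∀ i, 0 < lam i) →
          C ≤ (∏ i, lam i) / (∑ i, lam i) ^ n →
          (∀ i, ε * (∑ j, lam j) ≤ lam i) ∧
          (∀ i, |1 / lam i - (n : ℝ) / (∑ j, lam j)| ≤
            ε ^ 2 / (4 * (n : ℝ) * β * (∑ j, lam j))) := by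
  have : NeZero n := ⟨by omega⟩
  have hn0 : (0 : ℝ) < n := by positivity
  set d := min (1 / 2) (1 / (32 * (n : ℝ) ^ 4 * β))
  have hd0 : 0 < d := lt_min (by norm_num) (by positivity)
  have hd_half : d ≤ 1 / 2 := min_le_left _ _
  refine ⟨exp (-d ^ 2 / (4 * n)) / (n : ℝ) ^ n, by positivity, ?_, 1 / (2 * n), by positivity,
    one_div_le_one_div_of_le hn0 (by linarith), fun lam hlam hC ↦ ?_⟩
  · refine div_lt_div_of_pos_right (exp_lt_one_iff.2 ?_) (by positivity)
    exact div_neg_of_neg_of_pos (neg_neg_of_pos (by positivity)) (by positivity)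
  have hH : 0 < ∑ j, lam j := sum_pos (fun j _ ↦ hlam j) univ_nonempty
  have hdev := abs_card_mul_div_sum_sub_one_le hlam hd0.le
    (by simpa only [Fintype.card_fin] using hC)
  simp only [Fintype.card_fin] at hdev
  refine ⟨fun i ↦ le_of_abs_mul_div_sub_one_le hn0 hH hd_half (hdev i), fun i ↦ ?_⟩
  calc _ ≤ 2 * n * d / ∑ j, lam j :=
        abs_one_div_sub_le_of_abs_mul_div_sub_one_le hn0 hH (hlam i) hd_half (hdev i)
    _ ≤ 2 * n * (1 / (32 * (n : ℝ) ^ 4 * β)) / ∑ j, lam j := by gcongr; exact min_le_right _ _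
    _ = _ := by field_simp; ring
end

section
/- Let n ≥ 2 and K₀ ≥ e^{n/(n-1)}. For f(K) = K^{1/n}·ln(K + K₀) and all K > 0: 1/n − 1 < K·f''(K)/f'(K) ≤ 2/n. In particular 0 < K f''(K)/f'(K) + 1 − 1/n ≤ (n+1)/n. -/
/-!
Write `S = K + K₀`, `L = log S`, `t = K / S` and `a = 1/n`. Factoring `K^(a-1)` out of `f'` and of
`K f''` turns the ratio into `K f''/f' = (a(a-1)L + 2at - t²) / (aL + t)`. With `L ≥ 0` (this is what
`K₀ ≥ e^{n/(n-1)} > 1` buys) and `0 < t < 1`, both bounds are then polynomial inequalities: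
the upper one says `a(1+a)L + t² ≥ 0` and the lower one says `t(a+1-t) > 0`.
-/

open Real Filter

section RpowMulLog

variable (a c : ℝ) {x : ℝ}

theorem hasDerivAt_log_add_const (hxc : 0 < x + c) :
    HasDerivAt (fun K : ℝ => log (K + c)) (x + c)⁻¹ x := by
  simpa using ((hasDerivAt_id x).add_const c).log hxc.ne'

theorem hasDerivAt_rpow_mul_log_add (hx : 0 < x) (hxc : 0 < x + c) :
    HasDerivAt (fun K : ℝ => K ^ a * log (K + c))
      (a * x ^ (a - 1) * log (x + c) + x ^ a / (x + c)) x :=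
  ((hasDerivAt_rpow_const (Or.inl hx.ne')).fun_mul (hasDerivAt_log_add_const c hxc)).congr_deriv
    (by ring)

theorem hasDerivAt_deriv_rpow_mul_log_add (hx : 0 < x) (hxc : 0 < x + c) :
    HasDerivAt (fun K : ℝ => a * K ^ (a - 1) * log (K + c) + K ^ a / (K + c))
      (a * (a - 1) * x ^ (a - 2) * log (x + c) + 2 * a * x ^ (a - 1) / (x + c)
        - x ^ a / (x + c) ^ 2) x := by
  have hlog := hasDerivAt_log_add_const c hxc
  have hpow := hasDerivAt_rpow_const (p := a) (Or.inl hx.ne')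
  have hpow' := hasDerivAt_rpow_const (p := a - 1) (Or.inl hx.ne')
  refine (((hpow'.const_mul a).fun_mul hlog).fun_add
    (hpow.fun_div ((hasDerivAt_id' x).add_const c) hxc.ne')).congr_deriv ?_
  rw [show a - 1 - 1 = a - 2 by ring]
  field_simp
  ring

theorem deriv_rpow_mul_log_add (hx : 0 < x) (hxc : 0 < x + c) :
    deriv (fun K : ℝ => K ^ a * log (K + c)) x
      = a * x ^ (a - 1) * log (x + c) + x ^ a / (x + c) :=
  (hasDerivAt_rpow_mul_log_add a c hx hxc).deriv

theorem deriv_deriv_rpow_mul_log_add (hx : 0 < x) (hxc : 0 < x + c) :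
    deriv (deriv fun K : ℝ => K ^ a * log (K + c)) x
      = a * (a - 1) * x ^ (a - 2) * log (x + c) + 2 * a * x ^ (a - 1) / (x + c)
        - x ^ a / (x + c) ^ 2 := by
  have hderiv : deriv (fun K : ℝ => K ^ a * log (K + c))
      =ᶠ[nhds x] fun K => a * K ^ (a - 1) * log (K + c) + K ^ a / (K + c) := by
    filter_upwards [eventually_gt_nhds hx, eventually_gt_nhds (neg_lt_iff_pos_add.2 hxc)]
      with y hy hyc
    exact deriv_rpow_mul_log_add a c hy (neg_lt_iff_pos_add.1 hyc)
  rw [hderiv.deriv_eq]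
  exact (hasDerivAt_deriv_rpow_mul_log_add a c hx hxc).deriv

theorem mul_deriv_deriv_div_deriv_rpow_mul_log_add (hx : 0 < x) (hxc : 0 < x + c) :
    x * deriv (deriv fun K : ℝ => K ^ a * log (K + c)) x
        / deriv (fun K : ℝ => K ^ a * log (K + c)) x
      = (a * (a - 1) * log (x + c) + 2 * a * (x / (x + c)) - (x / (x + c)) ^ 2)
        / (a * log (x + c) + x / (x + c)) := by
  rw [deriv_deriv_rpow_mul_log_add a c hx hxc, deriv_rpow_mul_log_add a c hx hxc]
  have hp : x ^ (a - 1) ≠ 0 := (rpow_pos_of_pos hx _).ne'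
  have hpow : x ^ a = x ^ (a - 1) * x := by
    rw [← rpow_add_one hx.ne', sub_add_cancel]
  have hpow' : x ^ (a - 2) = x ^ (a - 1) / x := by
    rw [← rpow_sub_one hx.ne', sub_sub, one_add_one_eq_two]
  rw [← mul_div_mul_left (a * (a - 1) * log (x + c) + _ - _) _ hp, hpow, hpow']
  congr 1 <;> field_simp

end RpowMulLog

theorem elasticity_bounds {a L t : ℝ} (ha : 0 ≤ a) (hL : 0 ≤ L) (ht : 0 < t) (ht1 : t < 1) :
    a - 1 < (a * (a - 1) * L + 2 * a * t - t ^ 2) / (a * L + t) ∧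
      (a * (a - 1) * L + 2 * a * t - t ^ 2) / (a * L + t) ≤ 2 * a := by
  have hD : 0 < a * L + t := by positivity
  constructor
  · rw [lt_div_iff₀ hD]
    nlinarith [mul_pos ht (show 0 < a + 1 - t by linarith)]
  · rw [div_le_iff₀ hD]
    nlinarith [mul_nonneg (mul_nonneg ha (by linarith : (0 : ℝ) ≤ 1 + a)) hL, sq_nonneg t]

/-- Condition 1.1(iii) for `f(K) = K^{1/n} ln(K+K₀)`:
`1/n − 1 < K f''(K)/f'(K) ≤ 2/n`, and in particular
`0 < K f''(K)/f'(K) + 1 − 1/n ≤ (n+1)/n`. -/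
theorem stmt_8 (n : ℕ) (hn : 2 ≤ n) (K₀ : ℝ)
    (hK₀ : Real.exp ((n : ℝ) / ((n : ℝ) - 1)) ≤ K₀) :
    ∀ K : ℝ, 0 < K →
      (1 / (n : ℝ) - 1 <
          K * deriv (deriv (fun K : ℝ => K ^ ((1 : ℝ) / n) * Real.log (K + K₀))) K /
            deriv (fun K : ℝ => K ^ ((1 : ℝ) / n) * Real.log (K + K₀)) K ∧
        K * deriv (deriv (fun K : ℝ => K ^ ((1 : ℝ) / n) * Real.log (K + K₀))) K /
            deriv (fun K : ℝ => K ^ ((1 : ℝ) / n) * Real.log (K + K₀)) K ≤ 2 / (n : ℝ)) ∧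
      (0 <
          K * deriv (deriv (fun K : ℝ => K ^ ((1 : ℝ) / n) * Real.log (K + K₀))) K /
            deriv (fun K : ℝ => K ^ ((1 : ℝ) / n) * Real.log (K + K₀)) K + 1 - 1 / (n : ℝ) ∧
        K * deriv (deriv (fun K : ℝ => K ^ ((1 : ℝ) / n) * Real.log (K + K₀))) K /
            deriv (fun K : ℝ => K ^ ((1 : ℝ) / n) * Real.log (K + K₀)) K + 1 - 1 / (n : ℝ) ≤
          ((n : ℝ) + 1) / (n : ℝ)) := by
  intro K hK
  have hn' : (2 : ℝ) ≤ n := by exact_mod_cast hn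
  have hK₀ : 1 < K₀ := (one_lt_exp_iff.2 (div_pos (by linarith) (by linarith))).trans_le hK₀
  have hS : 1 < K + K₀ := by linarith
  rw [mul_deriv_deriv_div_deriv_rpow_mul_log_add _ _ hK (by linarith)]
  obtain ⟨hlower, hupper⟩ := elasticity_bounds (a := 1 / (n : ℝ)) (t := K / (K + K₀)) (by positivity)
    (log_nonneg hS.le) (div_pos hK (by linarith)) ((div_lt_one (by linarith)).2 (by linarith))
  have h2 : 2 / (n : ℝ) = 2 * (1 / n) := by ring
  have hn1 : ((n : ℝ) + 1) / n = 2 * (1 / n) + 1 - 1 / n := by field_simp; ring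
  refine ⟨⟨hlower, h2 ▸ hupper⟩, by linarith, by rw [hn1]; linarith⟩
end

section
/- Let H > 0, K > 0, and let h be a positive definite symmetric matrix with tr(h) = H and a covariant 3-tensor ∇h with traces ∇H and ∇K = K h^{kl}∇h_{kl}. Then the pointwise algebraic identity (1/(nK²))∇ᵢK∇ⱼK + ∇ᵢh^{kl}∇ⱼh_{kl} = −(1/H²)h^{km}h^{ln}(H∇ᵢh_{mn} − ∇ᵢH h_{mn})(H∇ⱼh_{kl} − ∇ⱼH h_{kl}) + (H^{2n}/(nK²))∇ᵢ(K/Hⁿ)∇ⱼ(K/Hⁿ) holds, where ∇ᵢh^{kl} = −h^{km}h^{ln}∇ᵢh_{mn}. -/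
/-!
Write `Xᵢ = h⁻¹ ∇ᵢh`, `aᵢ = tr Xᵢ` and `dᵢ = ∇ᵢH / H`. Index contractions against `h⁻¹` are
traces of matrix products, so the left side is `aᵢ aⱼ / n - tr (Xᵢ Xⱼ)`, the quadratic form is
`-tr ((Xᵢ - dᵢ) (Xⱼ - dⱼ)) = -tr (Xᵢ Xⱼ) + aᵢ dⱼ + dᵢ aⱼ - n dᵢ dⱼ`, and since
`∇ᵢ(K/Hⁿ) = (K/Hⁿ) (aᵢ - n dᵢ)` the last term is `(aᵢ - n dᵢ) (aⱼ - n dⱼ) / n`.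
The cross terms cancel and both sides agree.
-/

open Matrix

namespace Matrix

variable {ι R : Type*} [Fintype ι]

lemma sum_sum_mul_eq_trace_mul_transpose [NonUnitalNonAssocSemiring R] (M N : Matrix ι ι R) :
    ∑ k, ∑ l, M k l * N k l = (M * Nᵀ).trace := by
  simp only [trace, diag, mul_apply, transpose_apply]

lemma sum_mul_mul_mul_eq_trace [CommSemiring R] (A B C : Matrix ι ι R) :
    ∑ k, ∑ l, ∑ m, ∑ m', A k m * A l m' * B m m' * C k l = (A * B * Aᵀ * Cᵀ).trace := by
  rw [← sum_sum_mul_eq_trace_mul_transpose]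
  refine Finset.sum_congr rfl fun k _ => Finset.sum_congr rfl fun l _ => ?_
  simp only [mul_apply, transpose_apply, Finset.sum_mul]
  rw [Finset.sum_comm]
  exact Finset.sum_congr rfl fun m' _ => Finset.sum_congr rfl fun m _ => by ring

lemma inv_mul_smul_sub_smul [CommRing R] [DecidableEq ι] {h : Matrix ι ι R} (hh : IsUnit h.det)
    (D : Matrix ι ι R) (a b : R) : h⁻¹ * (a • D - b • h) = a • (h⁻¹ * D) - b • 1 := by
  rw [Matrix.mul_sub, Matrix.mul_smul, Matrix.mul_smul, nonsing_inv_mul h hh]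

lemma trace_inv_mul_smul_sub_smul_mul_inv_mul_smul_sub_smul [CommRing R] [DecidableEq ι]
    {h : Matrix ι ι R} (hh : IsUnit h.det) (D E : Matrix ι ι R) (a b c d : R) :
    (h⁻¹ * (a • D - b • h) * h⁻¹ * (c • E - d • h)).trace =
      a * c * (h⁻¹ * D * (h⁻¹ * E)).trace - a * d * (h⁻¹ * D).trace
        - b * c * (h⁻¹ * E).trace + b * d * Fintype.card ι := by
  rw [Matrix.mul_assoc, inv_mul_smul_sub_smul hh, inv_mul_smul_sub_smul hh, Matrix.sub_mul,
    Matrix.mul_sub, Matrix.mul_sub]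
  simp only [Matrix.smul_mul, Matrix.mul_smul, smul_smul, Matrix.one_mul, Matrix.mul_one, trace_sub, trace_smul,
    trace_one, smul_eq_mul]
  ring

end Matrix

theorem stmt_17_general (n : ℕ) (hn : 2 ≤ n) (H K : ℝ) (hHpos : 0 < H) (hKpos : 0 < K)
    (h : Matrix (Fin n) (Fin n) ℝ) (hPD : h.PosDef)
    (Dh : Fin n → Matrix (Fin n) (Fin n) ℝ) (hDhsym : ∀ i, (Dh i).IsSymm)
    (DH DK Dp : Fin n → ℝ)
    (hDK : ∀ i, DK i = K * (h⁻¹ * Dh i).trace)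
    (hDp : ∀ i, Dp i = DK i / H ^ n - n * K * DH i / H ^ (n + 1)) :
    ∀ i j : Fin n,
      (1 / ((n : ℝ) * K ^ 2)) * DK i * DK j +
        (∑ k, ∑ l, (-(h⁻¹ * Dh i * h⁻¹)) k l * Dh j k l) =
      -(1 / H ^ 2) *
        (∑ k, ∑ l, ∑ m, ∑ m', h⁻¹ k m * h⁻¹ l m' *
          (H * Dh i m m' - DH i * h m m') * (H * Dh j k l - DH j * h k l)) +
      (H ^ (2 * n) / ((n : ℝ) * K ^ 2)) * Dp i * Dp j := by
  intro i j
  have hsymm : h.IsSymm := isHermitian_iff_isSymm.mp hPD.isHermitian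
  have hdet : IsUnit h.det := (isUnit_iff_isUnit_det h).mp hPD.isUnit
  have hDhij : ∑ k, ∑ l, (-(h⁻¹ * Dh i * h⁻¹)) k l * Dh j k l =
      -(h⁻¹ * Dh i * (h⁻¹ * Dh j)).trace := by
    rw [sum_sum_mul_eq_trace_mul_transpose, (hDhsym j).eq, Matrix.neg_mul, trace_neg,
      Matrix.mul_assoc (h⁻¹ * Dh i)]
  have hquad : ∑ k, ∑ l, ∑ m, ∑ m', h⁻¹ k m * h⁻¹ l m' *
        (H * Dh i m m' - DH i * h m m') * (H * Dh j k l - DH j * h k l) =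
      H * H * (h⁻¹ * Dh i * (h⁻¹ * Dh j)).trace - H * DH j * (h⁻¹ * Dh i).trace
        - DH i * H * (h⁻¹ * Dh j).trace + DH i * DH j * n := by
    have hsymmj : (H • Dh j - DH j • h).IsSymm := ((hDhsym j).smul H).sub (hsymm.smul (DH j))
    have := sum_mul_mul_mul_eq_trace h⁻¹ (H • Dh i - DH i • h) (H • Dh j - DH j • h)
    simp only [Matrix.sub_apply, Matrix.smul_apply, smul_eq_mul, hsymm.inv.eq, hsymmj.eq] at this
    rw [this, trace_inv_mul_smul_sub_smul_mul_inv_mul_smul_sub_smul hdet, Fintype.card_fin]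
  have hn0 : (n : ℝ) ≠ 0 := Nat.cast_ne_zero.mpr (by omega)
  rw [hDhij, hquad, hDp i, hDp j, hDK i, hDK j]
  field_simp [hHpos.ne', hKpos.ne']
  ring

/-- The key algebraic identity (3.11): with `h` the (positive definite,
symmetric) second fundamental form in an orthonormal frame, `H = tr h`,
`∇ᵢK = K (h⁻¹)^{kl}∇ᵢh_{kl}`, `∇ᵢH = tr(∇ᵢh)`, `∇ᵢh^{kl} = −(h⁻¹ ∇ᵢh h⁻¹)^{kl}`
and `∇ᵢ(K/Hⁿ) = H^{−n}∇ᵢK − nKH^{−n−1}∇ᵢH`, one has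
`(1/(nK²))∇ᵢK∇ⱼK + ∇ᵢh^{kl}∇ⱼh_{kl}
  = −(1/H²) h^{km}h^{ln}(H∇ᵢh_{mn} − ∇ᵢH h_{mn})(H∇ⱼh_{kl} − ∇ⱼH h_{kl})
    + (H^{2n}/(nK²))∇ᵢ(K/Hⁿ)∇ⱼ(K/Hⁿ)`. -/
theorem stmt_17 (n : ℕ) (hn : 2 ≤ n) (H K : ℝ) (hHpos : 0 < H) (hKpos : 0 < K)
    (h : Matrix (Fin n) (Fin n) ℝ) (hPD : h.PosDef)
    (htr : h.trace = H)
    (Dh : Fin n → Matrix (Fin n) (Fin n) ℝ) (hDhsym : ∀ i, (Dh i).IsSymm)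
    (DH DK Dp : Fin n → ℝ)
    (hDH : ∀ i, DH i = (Dh i).trace)
    (hDK : ∀ i, DK i = K * (h⁻¹ * Dh i).trace)
    (hDp : ∀ i, Dp i = DK i / H ^ n - n * K * DH i / H ^ (n + 1)) :
    ∀ i j : Fin n,
      (1 / ((n : ℝ) * K ^ 2)) * DK i * DK j +
        (∑ k, ∑ l, (-(h⁻¹ * Dh i * h⁻¹)) k l * Dh j k l) =
      -(1 / H ^ 2) *
        (∑ k, ∑ l, ∑ m, ∑ m', h⁻¹ k m * h⁻¹ l m' *
          (H * Dh i m m' - DH i * h m m') * (H * Dh j k l - DH j * h k l)) +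
      (H ^ (2 * n) / ((n : ℝ) * K ^ 2)) * Dp i * Dp j :=
  stmt_17_general n hn H K hHpos hKpos h hPD Dh hDhsym DH DK Dp hDK hDp
end
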